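/- arXiv:1212.3385 — 3 statements merged into one kernel-verified Lean document; each statement's English description precedes it below -/
import Mathlib

section
/- Let m ≥ 1 and let n_1, …, n_m be natural numbers with indices i_1, …, i_m satisfying 0 ≤ i_j ≤ n_j for each j. Set N = n_1 + ⋯ + n_m, J = i_1 + ⋯ + i_m, and M = ∏_{j=1}^m C(n_j, i_j). Then ∫_0^1 ∏_{j=1}^m B_{i_j}^{n_j}(t) dt = M / ((N+1) · C(N, J)). -/
/-- The Bernstein polynomial `B_i^n(t) = C(n,i) t^i (1-t)^(n-i)`. -/
noncomputable def bern (n i : ℕ) (t : ℝ) : ℝ :=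
  (n.choose i : ℝ) * t ^ i * (1 - t) ^ (n - i)

/-!
The powers of `t` and of `1 - t` multiply to `t ^ J * (1 - t) ^ (N - J)`, so the product of the
Bernstein polynomials is `M / C(N, J)` times `B_J^N`. Every `B_k^N` has integral `1 / (N + 1)`
over `[0, 1]`, by the Beta integral `∫ t ^ a (1 - t) ^ b = a! b! / (a + b + 1)!`.
-/

open Nat Finset

theorem integral_pow_mul_one_sub_pow (a b : ℕ) :
    ∫ t in (0:ℝ)..1, t ^ a * (1 - t) ^ b = (a ! * b ! : ℝ) / (a + b + 1)! := by
  have h := Complex.betaIntegral_eq_Gamma_mul_div (a + 1) (b + 1)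
    (by norm_cast; omega) (by norm_cast; omega)
  rw [show (a + 1 + (b + 1) : ℂ) = ((a + b + 1 : ℕ) : ℂ) + 1 by push_cast; ring,
    Complex.betaIntegral] at h
  simp only [add_sub_cancel_right, Complex.cpow_natCast, Complex.Gamma_nat_eq_factorial] at h
  apply Complex.ofReal_injective
  rw [← intervalIntegral.integral_ofReal]
  push_cast at h ⊢
  exact h

theorem integral_bern {n k : ℕ} (hk : k ≤ n) : ∫ t in (0:ℝ)..1, bern n k t = 1 / (n + 1) := by
  simp_rw [bern, mul_assoc, intervalIntegral.integral_const_mul,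
    integral_pow_mul_one_sub_pow, Nat.add_sub_cancel' hk, Nat.cast_choose ℝ hk, factorial_succ]
  push_cast
  field_simp

theorem prod_bern_eq_mul_bern_sum {ι : Type*} (s : Finset ι) {n i : ι → ℕ}
    (hi : ∀ j ∈ s, i j ≤ n j) (t : ℝ) :
    ∏ j ∈ s, bern (n j) (i j) t =
      ((∏ j ∈ s, (n j).choose (i j) : ℕ) : ℝ) / (∑ j ∈ s, n j).choose (∑ j ∈ s, i j)
        * bern (∑ j ∈ s, n j) (∑ j ∈ s, i j) t := by
  have hC : ((∑ j ∈ s, n j).choose (∑ j ∈ s, i j) : ℝ) ≠ 0 :=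
    Nat.cast_ne_zero.mpr (Nat.choose_pos (sum_le_sum hi)).ne'
  simp only [bern, prod_mul_distrib, prod_pow_eq_pow_sum, ← sum_tsub_distrib _ hi]
  push_cast
  field_simp

theorem bernstein_product_integral_general (m : ℕ) (n i : Fin m → ℕ)
    (hi : ∀ j, i j ≤ n j)
    (N J M : ℕ) (hN : N = ∑ j, n j) (hJ : J = ∑ j, i j)
    (hM : M = ∏ j, (n j).choose (i j)) :
    ∫ t in (0:ℝ)..1, ∏ j, bern (n j) (i j) t
      = (M : ℝ) / (((N : ℝ) + 1) * (N.choose J : ℝ)) := by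
  subst hN hJ hM
  simp_rw [prod_bern_eq_mul_bern_sum univ (fun j _ => hi j), intervalIntegral.integral_const_mul,
    integral_bern (sum_le_sum fun j _ => hi j)]
  rw [mul_one_div, div_div, mul_comm]

theorem bernstein_product_integral (m : ℕ) (hm : 1 ≤ m) (n i : Fin m → ℕ)
    (hi : ∀ j, i j ≤ n j)
    (N J M : ℕ) (hN : N = ∑ j, n j) (hJ : J = ∑ j, i j)
    (hM : M = ∏ j, (n j).choose (i j)) :
    ∫ t in (0:ℝ)..1, ∏ j, bern (n j) (i j) t
      = (M : ℝ) / (((N : ℝ) + 1) * (N.choose J : ℝ)) :=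
  bernstein_product_integral_general m n i hi N J M hN hJ hM
end

section
/- Let f(t) = ∑_{i=a}^{k} f_i B_i^m(t) with real coefficients f_i and 0 ≤ a < k ≤ m, and let g(t) = ∑_{i=0}^{n} g_i B_i^n(t) with real coefficients g_i. Then for every real t, f(t)·g(t) = ∑_{i=a}^{k+n} ( ∑_{j=max(a, i−n)}^{min(k, i)} [C(m, j) · C(n, i−j) / C(m+n, i)] f_j g_{i−j} ) B_i^{m+n}(t). -/
lemma bern_mul_bern (m n j l : ℕ) (hj : j ≤ m) (hl : l ≤ n) (t : ℝ) :
    bern m j t * bern n l t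
      = ((m.choose j : ℝ) * (n.choose l : ℝ) / (((m + n).choose (j + l)) : ℝ))
          * bern (m + n) (j + l) t := by
  have hc : (((m + n).choose (j + l)) : ℝ) ≠ 0 := by
    exact_mod_cast (Nat.choose_pos (by omega)).ne'
  unfold bern
  have h1 : m + n - (j + l) = (m - j) + (n - l) := by omega
  rw [h1, pow_add, pow_add]
  field_simp

theorem bernstein_product_formula (m n a k : ℕ) (hak : a < k) (hkm : k ≤ m)
    (f g : ℕ → ℝ) (t : ℝ) :
    (∑ i ∈ Finset.Icc a k, f i * bern m i t) *
      (∑ i ∈ Finset.range (n + 1), g i * bern n i t)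
    = ∑ i ∈ Finset.Icc a (k + n),
        (∑ j ∈ Finset.Icc (max a (i - n)) (min k i),
          ((m.choose j : ℝ) * ((n.choose (i - j)) : ℝ) / (((m + n).choose i) : ℝ))
            * f j * g (i - j)) * bern (m + n) i t := by
  rw [Finset.sum_mul_sum]
  simp_rw [Finset.sum_mul]
  rw [Finset.sum_sigma', Finset.sum_sigma']
  refine Finset.sum_nbij' (fun p => ⟨p.1 + p.2, p.1⟩) (fun p => ⟨p.2, p.1 - p.2⟩)
    ?_ ?_ ?_ ?_ ?_
  · rintro ⟨j, l⟩ hp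
    simp only [Finset.mem_sigma, Finset.mem_Icc, Finset.mem_range] at hp ⊢
    omega
  · rintro ⟨i, j⟩ hp
    simp only [Finset.mem_sigma, Finset.mem_Icc, Finset.mem_range] at hp ⊢
    omega
  · rintro ⟨j, l⟩ hp
    simp
  · rintro ⟨i, j⟩ hp
    simp only [Finset.mem_sigma, Finset.mem_Icc] at hp
    simp only [Sigma.mk.inj_iff]
    constructor
    · omega
    · exact heq_of_eq (by omega)
  · rintro ⟨j, l⟩ hp
    simp only [Finset.mem_sigma, Finset.mem_Icc, Finset.mem_range] at hp
    have hj : j ≤ m := le_trans hp.1.2 hkm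
    have hl : l ≤ n := by omega
    have h : j + l - j = l := by omega
    dsimp only
    rw [h]
    linear_combination f j * g l * bern_mul_bern m n j l hj hl t
end

section
/- Let P(t) = (∑_{i=0}^{n} ω_i p_i B_i^n(t)) / (∑_{i=0}^{n} ω_i B_i^n(t)) be a rational Bézier curve of degree n ≥ 2 with control points p_0, …, p_n ∈ ℝ^d and strictly positive weights ω_0, …, ω_n with ω_0 = ω_n = 1. Then the second derivative of P at t = 0 satisfies P″(0) = n { ω_2 (n−1) p_2 + 2 ω_1 (1 − n ω_1) p_1 + [2 ω_1 (n ω_1 − 1) + ω_2 (1 − n)] p_0 }. -/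
open Polynomial Filter Topology

namespace bernsteinPolynomial

variable {R : Type*} [CommRing R]

theorem derivative_at_0_zero (n : ℕ) :
    (derivative (bernsteinPolynomial R n 0)).eval 0 = -n := by
  simp [derivative_zero, eval_at_0]

theorem derivative_at_0_one (n : ℕ) :
    (derivative (bernsteinPolynomial R n 1)).eval 0 = n := by
  simpa using iterate_derivative_at_0 R n 1

theorem iterate_derivative_two_at_0_zero (n : ℕ) :
    (derivative^[2] (bernsteinPolynomial R n 0)).eval 0 = n * (n - 1) := by
  rcases n with _ | n
  · simp [bernsteinPolynomial]
  · simp [derivative_zero, eval_at_0]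
    ring

theorem iterate_derivative_two_at_0_one (n : ℕ) :
    (derivative^[2] (bernsteinPolynomial R n 1)).eval 0 = -2 * n * (n - 1) := by
  rcases n with _ | n
  · simp [bernsteinPolynomial]
  · simp [derivative_succ, derivative_zero, eval_at_0]
    ring

theorem iterate_derivative_two_at_0_two (n : ℕ) :
    (derivative^[2] (bernsteinPolynomial R n 2)).eval 0 = n * (n - 1) := by
  rw [iterate_derivative_at_0]
  rcases n with _ | n
  · simp
  · simp [ascPochhammer_succ_right]
    ring

end bernsteinPolynomial

section QuotientRule

variable {𝕜 E : Type*} [NontriviallyNormedField 𝕜] [NormedAddCommGroup E] [NormedSpace 𝕜 E]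
  {D : 𝕜 → 𝕜} {N : 𝕜 → E} {x : 𝕜}

theorem HasDerivAt.inv_smul {d : 𝕜} {v : E} (hD : HasDerivAt D d x) (hN : HasDerivAt N v x)
    (hx : D x ≠ 0) :
    HasDerivAt (fun t => (D t)⁻¹ • N t) ((D x)⁻¹ • (v - d • (D x)⁻¹ • N x)) x := by
  refine ((hD.inv hx).smul hN).congr_deriv ?_
  simp only [Pi.inv_apply]
  match_scalars <;> field_simp

theorem hasDerivAt_deriv_inv_smul {D' : 𝕜 → 𝕜} {N' : 𝕜 → E} {d : 𝕜} {v : E}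
    (hD : ∀ᶠ t in 𝓝 x, HasDerivAt D (D' t) t) (hN : ∀ᶠ t in 𝓝 x, HasDerivAt N (N' t) t)
    (hD' : HasDerivAt D' d x) (hN' : HasDerivAt N' v x) (hx : D x ≠ 0) :
    HasDerivAt (deriv fun t => (D t)⁻¹ • N t)
      ((D x)⁻¹ • (v - (2 * D' x) • deriv (fun t => (D t)⁻¹ • N t) x - d • (D x)⁻¹ • N x)) x := by
  have hne : ∀ᶠ t in 𝓝 x, D t ≠ 0 := hD.self_of_nhds.continuousAt.eventually_ne hx
  have hderiv : deriv (fun t => (D t)⁻¹ • N t) =ᶠ[𝓝 x]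
      fun t => (D t)⁻¹ • (N' t - D' t • (D t)⁻¹ • N t) := by
    filter_upwards [hD, hN, hne] with t hDt hNt ht
    exact (hDt.inv_smul hNt ht).deriv
  have hP := hD.self_of_nhds.inv_smul hN.self_of_nhds hx
  refine HasDerivAt.congr_of_eventuallyEq ?_ hderiv
  refine ((hD.self_of_nhds.inv hx).smul (hN'.sub (hD'.smul hP))).congr_deriv ?_
  rw [hP.deriv]
  simp only [Pi.inv_apply, Pi.sub_apply, Pi.smul_apply']
  match_scalars <;> field_simp <;> ring

end QuotientRule

theorem bern_eq_eval (n i : ℕ) (t : ℝ) : bern n i t = (bernsteinPolynomial ℝ n i).eval t := by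
  simp [bern, bernsteinPolynomial]

section WeightedBernstein

variable {E : Type*} [NormedAddCommGroup E] [NormedSpace ℝ E] (n : ℕ) (ω : ℕ → ℝ) (c : ℕ → E)

noncomputable def weightedBernsteinDeriv (k : ℕ) (t : ℝ) : E :=
  ∑ i ∈ Finset.range (n + 1), (ω i * (derivative^[k] (bernsteinPolynomial ℝ n i)).eval t) • c i

theorem weightedBernsteinDeriv_zero (t : ℝ) :
    weightedBernsteinDeriv n ω c 0 t = ∑ i ∈ Finset.range (n + 1), (ω i * bern n i t) • c i := by
  simp [weightedBernsteinDeriv, bern_eq_eval]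

theorem hasDerivAt_weightedBernsteinDeriv (k : ℕ) (t : ℝ) :
    HasDerivAt (weightedBernsteinDeriv n ω c k) (weightedBernsteinDeriv n ω c (k + 1) t) t := by
  simp only [weightedBernsteinDeriv, Function.iterate_succ_apply']
  exact .fun_sum fun i _ => ((Polynomial.hasDerivAt _ t).const_mul (ω i)).smul_const (c i)

theorem weightedBernsteinDeriv_at_zero {k : ℕ} (hk : k ≤ n) :
    weightedBernsteinDeriv n ω c k 0 =
      ∑ i ∈ Finset.range (k + 1),
        (ω i * (derivative^[k] (bernsteinPolynomial ℝ n i)).eval 0) • c i := by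
  refine (Finset.sum_subset (Finset.range_subset_range.2 (by omega)) fun i _ hi => ?_).symm
  rw [bernsteinPolynomial.iterate_derivative_at_0_eq_zero_of_lt ℝ n (by simpa using hi),
    mul_zero, zero_smul]

theorem weightedBernsteinDeriv_zero_at_zero : weightedBernsteinDeriv n ω c 0 0 = ω 0 • c 0 := by
  simp [weightedBernsteinDeriv_at_zero n ω c (Nat.zero_le n), bernsteinPolynomial.eval_at_0]

theorem weightedBernsteinDeriv_one_at_zero (hn : 1 ≤ n) :
    weightedBernsteinDeriv n ω c 1 0 = (n : ℝ) • (ω 1 • c 1 - ω 0 • c 0) := by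
  simp only [weightedBernsteinDeriv_at_zero n ω c hn, Finset.sum_range_succ, Finset.sum_range_zero,
    Function.iterate_one, bernsteinPolynomial.derivative_at_0_zero,
    bernsteinPolynomial.derivative_at_0_one]
  module

theorem weightedBernsteinDeriv_two_at_zero (hn : 2 ≤ n) :
    weightedBernsteinDeriv n ω c 2 0 =
      ((n : ℝ) * (n - 1)) • (ω 2 • c 2 - (2 * ω 1) • c 1 + ω 0 • c 0) := by
  simp only [weightedBernsteinDeriv_at_zero n ω c hn, Finset.sum_range_succ, Finset.sum_range_zero,
    bernsteinPolynomial.iterate_derivative_two_at_0_zero,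
    bernsteinPolynomial.iterate_derivative_two_at_0_one,
    bernsteinPolynomial.iterate_derivative_two_at_0_two]
  module

end WeightedBernstein

theorem rational_bezier_second_deriv_at_zero_general (n : ℕ) (hn : 2 ≤ n) (d : ℕ)
    (p : ℕ → EuclideanSpace ℝ (Fin d)) (ω : ℕ → ℝ)
    (hω0 : ω 0 = 1)
    (P : ℝ → EuclideanSpace ℝ (Fin d))
    (hP : ∀ t, P t = (∑ i ∈ Finset.range (n + 1), ω i * bern n i t)⁻¹ •
        ∑ i ∈ Finset.range (n + 1), (ω i * bern n i t) • p i) :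
    deriv (deriv P) 0 = (n : ℝ) •
      ((ω 2 * ((n : ℝ) - 1)) • p 2 +
        (2 * ω 1 * (1 - (n : ℝ) * ω 1)) • p 1 +
        (2 * ω 1 * ((n : ℝ) * ω 1 - 1) + ω 2 * (1 - (n : ℝ))) • p 0) := by
  have hPDN : P = fun t =>
      (weightedBernsteinDeriv n ω (fun _ => (1 : ℝ)) 0 t)⁻¹ • weightedBernsteinDeriv n ω p 0 t := by
    funext t
    simp [hP, weightedBernsteinDeriv_zero]
  have hD0_ne : weightedBernsteinDeriv n ω (fun _ => (1 : ℝ)) 0 0 ≠ 0 := by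
    simp [weightedBernsteinDeriv_zero_at_zero, hω0]
  have hD := hasDerivAt_weightedBernsteinDeriv n ω fun _ => (1 : ℝ)
  have hN := hasDerivAt_weightedBernsteinDeriv n ω p
  have hP' := (hD 0 0).inv_smul (hN 0 0) hD0_ne
  have hP'' := hasDerivAt_deriv_inv_smul (.of_forall (hD 0)) (.of_forall (hN 0)) (hD 1 0) (hN 1 0) hD0_ne
  rw [hPDN, hP''.deriv, hP'.deriv]
  simp only [zero_add, weightedBernsteinDeriv_zero_at_zero, weightedBernsteinDeriv_one_at_zero n _ _
    (by omega : 1 ≤ n), weightedBernsteinDeriv_two_at_zero n _ _ hn, hω0]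
  match_scalars <;> ring

theorem rational_bezier_second_deriv_at_zero (n : ℕ) (hn : 2 ≤ n) (d : ℕ)
    (p : ℕ → EuclideanSpace ℝ (Fin d)) (ω : ℕ → ℝ)
    (hω : ∀ i ≤ n, 0 < ω i) (hω0 : ω 0 = 1) (hωn : ω n = 1)
    (P : ℝ → EuclideanSpace ℝ (Fin d))
    (hP : ∀ t, P t = (∑ i ∈ Finset.range (n + 1), ω i * bern n i t)⁻¹ •
        ∑ i ∈ Finset.range (n + 1), (ω i * bern n i t) • p i) :
    deriv (deriv P) 0 = (n : ℝ) •
      ((ω 2 * ((n : ℝ) - 1)) • p 2 +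
        (2 * ω 1 * (1 - (n : ℝ) * ω 1)) • p 1 +
        (2 * ω 1 * ((n : ℝ) * ω 1 - 1) + ω 2 * (1 - (n : ℝ))) • p 0) :=
  rational_bezier_second_deriv_at_zero_general n hn d p ω hω0 P hP
end
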